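/- The normalized determinant H̃(x,y) = H(x,y)/∫_D H(x,y)dy, where H(x,y) = det((2/π)·x_i/(x_i²+y_j²)), converges as all x_i → t > 0 (with x ∈ D) to (1/M_t) ∏_j (t² + y_j²)^{-n} ∏_{i<j}(y_i² - y_j²), pointwise for y ∈ D, where M_t = ∫_D ∏_j (t² + y_j²)^{-n} ∏_{i<j}(y_i² - y_j²) dy. -/

import Mathlib

/-!
By the Cauchy determinant formula,
`H(x, y) = (∏ᵢ (2/π) xᵢ) ∏_{i<j} (xᵢ² - xⱼ²) · K(x, y)` with
`K(x, y) = ∏_{i<j} (yᵢ² - yⱼ²) / ∏_{i,j} (xᵢ² + yⱼ²)`, and the `x`-only prefactor is nonzero on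
`D`, so it cancels from `H(x, y) / ∫_D H(x, ·)`, leaving `K(x, y) / ∫_D K(x, ·)`. The kernel is
continuous in `x` away from `xᵢ = 0`, and as soon as all `xᵢ² ≥ c > 0` it is dominated by
`c^{-n(n-1)/2} ∏ⱼ (c + yⱼ²)⁻¹`, which is integrable; dominated convergence then gives
`∫_D K(x, ·) → ∫_D K(t, ·) = M_t`, and `M_t > 0` because `K(t, ·)` is positive on the open set `D`.
-/
open Real Finset Filter MeasureTheory Topology

namespace Matrix

variable {K : Type*} [Field K]

theorem det_cauchy_succ {n : ℕ} (a b : Fin (n + 1) → K) (h : ∀ i j, a i + b j ≠ 0) :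
    det (of fun i j => (a i + b j)⁻¹) =
      (a 0 + b 0)⁻¹ * (∏ i : Fin n, (a i.succ - a 0) / (a i.succ + b 0)) *
        det (of fun i j : Fin n => (a i.succ + b j.succ)⁻¹) *
          ∏ j : Fin n, (b j.succ - b 0) / (a 0 + b j.succ) := by
  -- subtracting `(a 0 + b 0) / (a i + b 0)` times row `0` from row `i` clears column `0` below `0`
  set W : Matrix (Fin (n + 1)) (Fin (n + 1)) K := of fun i j =>
    if i = 0 then (a 0 + b j)⁻¹
    else (a i - a 0) / (a i + b 0) * (a i + b j)⁻¹ * ((b j - b 0) / (a 0 + b j))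
  have hW : det (of fun i j => (a i + b j)⁻¹) = det W := by
    refine det_eq_of_forall_row_eq_smul_add_const
      (fun i => if i = 0 then 0 else (a 0 + b 0) / (a i + b 0)) 0 (by simp) fun i j => ?_
    rcases eq_or_ne i 0 with rfl | hi
    · simp [W]
    · have := h i j; have := h i 0; have := h 0 j
      simp only [W, of_apply, hi, ↓reduceIte]
      field_simp
      ring
  rw [hW, det_succ_column_zero, Finset.sum_eq_single 0]
  · have hsub : W.submatrix Fin.succ Fin.succ =
        diagonal (fun i : Fin n => (a i.succ - a 0) / (a i.succ + b 0)) *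
          of (fun i j : Fin n => (a i.succ + b j.succ)⁻¹) *
            diagonal (fun j : Fin n => (b j.succ - b 0) / (a 0 + b j.succ)) := by
      ext i j
      simp [W, diagonal_mul, mul_diagonal]
    rw [Fin.succAbove_zero, hsub, det_mul, det_mul, det_diagonal, det_diagonal]
    simp [W, mul_assoc]
  · intro i _ hi
    obtain ⟨i, rfl⟩ := Fin.exists_succ_eq.2 hi
    simp [W]
  · simp

theorem det_cauchy {n : ℕ} (a b : Fin n → K) (h : ∀ i j, a i + b j ≠ 0) :
    det (of fun i j => (a i + b j)⁻¹) =
      (∏ i, ∏ j ∈ Ioi i, (a i - a j) * (b i - b j)) / ∏ i, ∏ j, (a i + b j) := by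
  induction n with
  | zero => simp
  | succ n ih =>
    rw [det_cauchy_succ a b h, ih _ _ fun i j => h _ _]
    have := h 0 0
    have : ∏ i : Fin n, (a i.succ + b 0) ≠ 0 := prod_ne_zero_iff.2 fun i _ => h _ _
    have : ∏ j : Fin n, (a 0 + b j.succ) ≠ 0 := prod_ne_zero_iff.2 fun j _ => h _ _
    have : ∏ i : Fin n, ∏ j : Fin n, (a i.succ + b j.succ) ≠ 0 :=
      prod_ne_zero_iff.2 fun i _ => prod_ne_zero_iff.2 fun j _ => h _ _
    have hswap : ∏ j : Fin n, (a 0 - a j.succ) * (b 0 - b j.succ) =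
        ∏ j : Fin n, (a j.succ - a 0) * (b j.succ - b 0) := prod_congr rfl fun _ _ => by ring
    simp only [Fin.prod_univ_succ, Fin.prod_Ioi_zero, Fin.prod_Ioi_succ]
    rw [hswap]
    simp only [prod_div_distrib, prod_mul_distrib]
    field_simp

end Matrix

section CauchyKernel

variable {n : ℕ}

noncomputable def cauchyKernel (x y : Fin n → ℝ) : ℝ :=
  (∏ i, ∏ j ∈ Ioi i, (y i ^ 2 - y j ^ 2)) / ∏ i, ∏ j, (x i ^ 2 + y j ^ 2)

theorem det_mul_div_sq_add_sq (c : ℝ) {x : Fin n → ℝ} (hx : ∀ i, x i ≠ 0) (y : Fin n → ℝ) :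
    Matrix.det (Matrix.of fun i j => c * x i / (x i ^ 2 + y j ^ 2)) =
      (∏ i, c * x i) * (∏ i, ∏ j ∈ Ioi i, (x i ^ 2 - x j ^ 2)) * cauchyKernel x y := by
  have hne : ∀ i j, x i ^ 2 + y j ^ 2 ≠ 0 := fun i j => by have := hx i; positivity
  have hfactor : Matrix.of (fun i j => c * x i / (x i ^ 2 + y j ^ 2)) =
      Matrix.diagonal (fun i => c * x i) * Matrix.of fun i j => (x i ^ 2 + y j ^ 2)⁻¹ := by
    ext i j
    simp [Matrix.diagonal_mul, div_eq_mul_inv]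
  rw [hfactor, Matrix.det_mul, Matrix.det_diagonal, Matrix.det_cauchy _ _ hne, cauchyKernel]
  simp only [prod_mul_distrib]
  ring

theorem cauchyKernel_const (t : ℝ) (y : Fin n → ℝ) :
    cauchyKernel (fun _ => t) y =
      (∏ j, (t ^ 2 + y j ^ 2) ^ (-(n : ℤ))) * ∏ i, ∏ j ∈ Ioi i, (y i ^ 2 - y j ^ 2) := by
  simp [cauchyKernel, prod_const, prod_pow, zpow_neg, prod_inv_distrib, div_eq_inv_mul]

theorem continuousAt_cauchyKernel_left {x₀ : Fin n → ℝ} (hx₀ : ∀ i, x₀ i ≠ 0) (y : Fin n → ℝ) :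
    ContinuousAt (cauchyKernel · y) x₀ := by
  refine continuousAt_const.div (continuous_finsetProd _ fun i _ =>
    continuous_finsetProd _ fun j _ => by fun_prop).continuousAt ?_
  exact prod_ne_zero_iff.2 fun i _ => prod_ne_zero_iff.2 fun j _ => by
    have := hx₀ i; positivity

theorem measurable_cauchyKernel (x : Fin n → ℝ) : Measurable (cauchyKernel x) := by
  refine (Finset.measurable_prod _ fun i _ => Finset.measurable_prod _ fun j _ => ?_).div
    (Finset.measurable_prod _ fun i _ => Finset.measurable_prod _ fun j _ => ?_) <;> fun_prop

theorem prod_prod_Ioi_mul_mul_prod {M : Type*} [CommMonoid M] (g : Fin n → M) :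
    (∏ i, ∏ j ∈ Ioi i, g i * g j) * ∏ k, g k = ∏ k, g k ^ n := by
  have hleft : ∏ i, ∏ _j ∈ Ioi i, g i = ∏ i, g i ^ (n - 1 - i) :=
    prod_congr rfl fun i _ => by rw [prod_const, Fin.card_Ioi]
  have hright : ∏ i, ∏ j ∈ Ioi i, g j = ∏ j, g j ^ (j : ℕ) := by
    rw [prod_comm' (t' := univ) (s' := Iio) (by simp)]
    exact prod_congr rfl fun j _ => by rw [prod_const, Fin.card_Iio]
  simp only [prod_mul_distrib]
  rw [hleft, hright, ← prod_mul_distrib, ← prod_mul_distrib]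
  exact prod_congr rfl fun i _ => by rw [← pow_add, ← pow_succ]; congr 1; omega

theorem abs_sq_sub_sq_le {a b c : ℝ} (hc : 0 < c) :
    |a ^ 2 - b ^ 2| ≤ c⁻¹ * ((c + a ^ 2) * (c + b ^ 2)) := by
  rw [abs_sub_le_iff, inv_mul_eq_div, le_div_iff₀ hc, le_div_iff₀ hc]
  constructor <;> nlinarith [sq_nonneg a, sq_nonneg b, sq_nonneg (a * b)]

theorem abs_cauchyKernel_le {c : ℝ} (hc : 0 < c) {x : Fin n → ℝ} (hx : ∀ i, c ≤ x i ^ 2)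
    (y : Fin n → ℝ) :
    |cauchyKernel x y| ≤ (∏ i : Fin n, ∏ _j ∈ Ioi i, c⁻¹) * ∏ j, (c + y j ^ 2)⁻¹ := by
  set g : Fin n → ℝ := fun j => c + y j ^ 2
  have hg : ∀ j, 0 < g j := fun j => by positivity
  have hP : 0 < ∏ i, ∏ j, (x i ^ 2 + y j ^ 2) :=
    prod_pos fun i _ => prod_pos fun j _ => (hg j).trans_le (by linarith [hx i])
  have hnum : |∏ i, ∏ j ∈ Ioi i, (y i ^ 2 - y j ^ 2)| ≤
      (∏ i : Fin n, ∏ _j ∈ Ioi i, c⁻¹) * ∏ i, ∏ j ∈ Ioi i, g i * g j := by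
    simp only [abs_prod, ← prod_mul_distrib]
    exact prod_le_prod (fun _ _ => prod_nonneg fun _ _ => abs_nonneg _) fun i _ =>
      prod_le_prod (fun _ _ => abs_nonneg _) fun j _ => abs_sq_sub_sq_le hc
  have hden : ∏ k, g k ^ n ≤ ∏ i, ∏ j, (x i ^ 2 + y j ^ 2) := by
    calc ∏ k, g k ^ n = ∏ _i : Fin n, ∏ j, g j := by
          rw [prod_const, card_univ, Fintype.card_fin, prod_pow]
      _ ≤ ∏ i, ∏ j, (x i ^ 2 + y j ^ 2) :=
          prod_le_prod (fun _ _ => prod_nonneg fun j _ => (hg j).le) fun i _ =>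
            prod_le_prod (fun j _ => (hg j).le) fun j _ => by simp only [g]; linarith [hx i]
  rw [cauchyKernel, abs_div, abs_of_pos hP, prod_inv_distrib, ← div_eq_mul_inv,
    div_le_div_iff₀ hP (prod_pos fun j _ => hg j)]
  calc |∏ i, ∏ j ∈ Ioi i, (y i ^ 2 - y j ^ 2)| * ∏ j, g j
      ≤ (∏ i : Fin n, ∏ _j ∈ Ioi i, c⁻¹) * ((∏ i, ∏ j ∈ Ioi i, g i * g j) * ∏ j, g j) := by
        rw [← mul_assoc]; gcongr
    _ = (∏ i : Fin n, ∏ _j ∈ Ioi i, c⁻¹) * ∏ k, g k ^ n := by rw [prod_prod_Ioi_mul_mul_prod]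
    _ ≤ (∏ i : Fin n, ∏ _j ∈ Ioi i, c⁻¹) * ∏ i, ∏ j, (x i ^ 2 + y j ^ 2) := by gcongr

theorem integrable_inv_add_sq {c : ℝ} (hc : 0 < c) : Integrable fun s : ℝ => (c + s ^ 2)⁻¹ := by
  refine (integrable_inv_one_add_sq.const_mul (min c 1)⁻¹).mono' (by fun_prop)
    (ae_of_all _ fun s => ?_)
  rw [Real.norm_eq_abs, abs_of_pos (by positivity), ← mul_inv]
  exact inv_anti₀ (by positivity) (by nlinarith [min_le_left c 1, min_le_right c 1, sq_nonneg s])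

theorem integrable_prod_inv_add_sq {c : ℝ} (hc : 0 < c) :
    Integrable fun y : Fin n → ℝ => ∏ j, (c + y j ^ 2)⁻¹ :=
  Integrable.fintype_prod (f := fun _ s => (c + s ^ 2)⁻¹) fun _ => integrable_inv_add_sq hc

theorem integrable_cauchyKernel {c : ℝ} (hc : 0 < c) {x : Fin n → ℝ} (hx : ∀ i, c ≤ x i ^ 2) :
    Integrable (cauchyKernel x) :=
  ((integrable_prod_inv_add_sq hc).const_mul _).mono'
    (measurable_cauchyKernel x).aestronglyMeasurable
    (ae_of_all _ fun y => (Real.norm_eq_abs _).trans_le (abs_cauchyKernel_le hc hx y))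

theorem eventually_forall_le_sq {c : ℝ} {x₀ : Fin n → ℝ} (hx₀ : ∀ i, c < x₀ i ^ 2) :
    ∀ᶠ x in 𝓝 x₀, ∀ i, c ≤ x i ^ 2 :=
  eventually_all.2 fun i =>
    (((continuous_apply i).pow 2).tendsto x₀).eventually (eventually_ge_nhds (hx₀ i))

theorem tendsto_integral_cauchyKernel {c : ℝ} (hc : 0 < c) {x₀ : Fin n → ℝ}
    (hx₀ : ∀ i, c < x₀ i ^ 2) (s : Set (Fin n → ℝ)) :
    Tendsto (fun x => ∫ y in s, cauchyKernel x y) (𝓝 x₀) (𝓝 (∫ y in s, cauchyKernel x₀ y)) := by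
  have hx₀_ne : ∀ i, x₀ i ≠ 0 := fun i => (pow_ne_zero_iff two_ne_zero).1 (hc.trans (hx₀ i)).ne'
  refine tendsto_integral_filter_of_dominated_convergence _
    (.of_forall fun x => (measurable_cauchyKernel x).aestronglyMeasurable)
    ((eventually_forall_le_sq hx₀).mono fun x hx => ae_of_all _ fun y =>
      (Real.norm_eq_abs _).trans_le (abs_cauchyKernel_le hc hx y))
    ((integrable_prod_inv_add_sq hc).const_mul _).integrableOn
    (ae_of_all _ fun y => continuousAt_cauchyKernel_left hx₀_ne y)

end CauchyKernel

section PosChamber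

variable {n : ℕ}

def posChamber (n : ℕ) : Set (Fin n → ℝ) := {x | StrictAnti x ∧ ∀ i, 0 < x i}

theorem isOpen_posChamber : IsOpen (posChamber n) := by
  have : posChamber n = (⋂ i, ⋂ j ∈ Ioi i, {x | x j < x i}) ∩ ⋂ i, {x | 0 < x i} := by
    ext x
    simp [posChamber, StrictAnti]
  rw [this]
  exact (isOpen_iInter_of_finite fun i => isOpen_biInter_finset fun j _ =>
      isOpen_lt (continuous_apply j) (continuous_apply i)).inter
    (isOpen_iInter_of_finite fun i => isOpen_lt continuous_const (continuous_apply i))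

theorem posChamber_nonempty : (posChamber n).Nonempty :=
  ⟨fun i => n - i, fun a b hab => by simpa using hab, fun i => by simp [i.isLt]⟩

theorem prod_sq_sub_sq_pos {x : Fin n → ℝ} (hx : x ∈ posChamber n) :
    0 < ∏ i, ∏ j ∈ Ioi i, (x i ^ 2 - x j ^ 2) :=
  prod_pos fun i _ => prod_pos fun j hj => by
    have := hx.1 (mem_Ioi.1 hj)
    have := hx.2 j
    nlinarith

theorem integral_cauchyKernel_posChamber_pos {c : ℝ} (hc : 0 < c) {x : Fin n → ℝ}
    (hx : ∀ i, c ≤ x i ^ 2) : 0 < ∫ y in posChamber n, cauchyKernel x y := by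
  have hpos : ∀ y ∈ posChamber n, 0 < cauchyKernel x y := fun y hy =>
    div_pos (prod_sq_sub_sq_pos hy)
      (prod_pos fun i _ => prod_pos fun j _ => by nlinarith [hx i, sq_nonneg (y j)])
  rw [setIntegral_pos_iff_support_of_nonneg_ae
    ((ae_restrict_iff' isOpen_posChamber.measurableSet).2 (ae_of_all _ fun y hy => (hpos y hy).le))
    (integrable_cauchyKernel hc hx).integrableOn]
  exact (isOpen_posChamber.measure_pos volume posChamber_nonempty).trans_le
    (measure_mono fun y hy => ⟨(hpos y hy).ne', hy⟩)

end PosChamber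

theorem stmt_4_general (n : ℕ) (t : ℝ) (ht : 0 < t)
    (D : Set (Fin n → ℝ)) (hD : D = {x : Fin n → ℝ | StrictAnti x ∧ ∀ i, 0 < x i})
    (y : Fin n → ℝ) :
    Tendsto
      (fun x : Fin n → ℝ =>
        Matrix.det (Matrix.of fun i j : Fin n =>
            (2 / Real.pi) * x i / ((x i) ^ 2 + (y j) ^ 2)) /
          ∫ y' in D, Matrix.det (Matrix.of fun i j : Fin n =>
            (2 / Real.pi) * x i / ((x i) ^ 2 + (y' j) ^ 2)))
      (nhdsWithin (fun _ => t) D)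
      (nhds
        (((∏ j, (t ^ 2 + (y j) ^ 2) ^ (-(n : ℤ))) *
            ∏ i, ∏ j ∈ Finset.univ.filter (fun j => i < j), ((y i) ^ 2 - (y j) ^ 2)) /
          ∫ y' in D, (∏ j, (t ^ 2 + (y' j) ^ 2) ^ (-(n : ℤ))) *
            ∏ i, ∏ j ∈ Finset.univ.filter (fun j => i < j), ((y' i) ^ 2 - (y' j) ^ 2))) := by
  obtain rfl : D = posChamber n := hD
  have hIoi : ∀ i : Fin n, univ.filter (fun j => i < j) = Ioi i := fun i => by ext; simp
  simp only [hIoi, ← cauchyKernel_const]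
  have hc : 0 < t ^ 2 / 2 := by positivity
  have ht_sq : ∀ i : Fin n, t ^ 2 / 2 < (fun _ => t) i ^ 2 := fun _ => half_lt_self (pow_pos ht 2)
  have hnum := continuousAt_cauchyKernel_left (fun _ => ht.ne') y
  have hden := tendsto_integral_cauchyKernel hc ht_sq (posChamber n)
  have hM := integral_cauchyKernel_posChamber_pos hc fun i => (ht_sq i).le
  refine ((hnum.div hden hM.ne').mono_left nhdsWithin_le_nhds).congr' ?_
  filter_upwards [self_mem_nhdsWithin] with x hx
  have hx_ne : ∀ i, x i ≠ 0 := fun i => (hx.2 i).ne'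
  have hfactor_ne : (∏ i, 2 / π * x i) * ∏ i, ∏ j ∈ Ioi i, (x i ^ 2 - x j ^ 2) ≠ 0 :=
    mul_ne_zero (prod_ne_zero_iff.2 fun i _ => by have := hx.2 i; positivity)
      (prod_sq_sub_sq_pos hx).ne'
  simp only [det_mul_div_sq_add_sq _ hx_ne, integral_const_mul]
  exact (mul_div_mul_left _ _ hfactor_ne).symm

/-- The normalized determinant of quadrant hitting densities converges, as all
starting points merge to t > 0 within the chamber D, to the Cauchy-type
ensemble density on the positive half-line. -/
theorem stmt_4 (n : ℕ) (t : ℝ) (ht : 0 < t)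
    (D : Set (Fin n → ℝ)) (hD : D = {x : Fin n → ℝ | StrictAnti x ∧ ∀ i, 0 < x i})
    (y : Fin n → ℝ) (hy : y ∈ D) :
    Tendsto
      (fun x : Fin n → ℝ =>
        Matrix.det (Matrix.of fun i j : Fin n =>
            (2 / Real.pi) * x i / ((x i) ^ 2 + (y j) ^ 2)) /
          ∫ y' in D, Matrix.det (Matrix.of fun i j : Fin n =>
            (2 / Real.pi) * x i / ((x i) ^ 2 + (y' j) ^ 2)))
      (nhdsWithin (fun _ => t) D)
      (nhds
        (((∏ j, (t ^ 2 + (y j) ^ 2) ^ (-(n : ℤ))) *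
            ∏ i, ∏ j ∈ Finset.univ.filter (fun j => i < j), ((y i) ^ 2 - (y j) ^ 2)) /
          ∫ y' in D, (∏ j, (t ^ 2 + (y' j) ^ 2) ^ (-(n : ℤ))) *
            ∏ i, ∏ j ∈ Finset.univ.filter (fun j => i < j), ((y' i) ^ 2 - (y' j) ^ 2))) :=
  stmt_4_general n t ht D hD y
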